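/- For constants a > 0 and b, c ∈ ℝ, define h(n) = logit(Φ(a·n + b·√n + c)). Then lim_{n→∞} (d/dn) h(n) / n = a², i.e., h(n) = (a²/2)n² + o(n²) in the sense that h grows like a quadratic in n with leading coefficient a²/2, and the derivative of h with respect to n² converges to a²/2. -/

import Mathlib

open Filter Real

/-- Standard normal CDF. -/
noncomputable def stdNormalCDF (z : ℝ) : ℝ :=
  ∫ t in Set.Iic z, Real.exp (-t ^ 2 / 2) / Real.sqrt (2 * Real.pi)

/-- Logit function. -/
noncomputable def logit (x : ℝ) : ℝ := Real.log x - Real.log (1 - x)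

/-! The chain rule gives `h'(n) = u'(n) · φ(u) · (1/Φ(u) + 1/(1 - Φ(u)))` with
`u = a n + b √n + c`. By Mills' ratio `1 - Φ(x) ~ φ(x)/x`, obtained from L'Hôpital's rule,
the factor `φ(u) · (…)` is asymptotic to `u`, so `h'(n) ~ u u' ~ a² n`. The second limit is the
first one after the substitution `n = √s`, because `d/ds h(√s) = h'(√s) / (2√s)`. -/

open MeasureTheory ProbabilityTheory Set Asymptotics Topology

noncomputable def stdNormalPDF : ℝ → ℝ := gaussianPDFReal 0 1

lemma stdNormalPDF_apply (x : ℝ) : stdNormalPDF x = exp (-x ^ 2 / 2) / √(2 * π) := by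
  simp [stdNormalPDF, gaussianPDFReal, div_eq_inv_mul]

lemma stdNormalPDF_pos (x : ℝ) : 0 < stdNormalPDF x :=
  gaussianPDFReal_pos _ _ _ one_ne_zero

lemma integrable_stdNormalPDF : Integrable stdNormalPDF :=
  integrable_gaussianPDFReal _ _

lemma integral_stdNormalPDF : ∫ x, stdNormalPDF x = 1 :=
  integral_gaussianPDFReal_eq_one _ one_ne_zero

lemma continuous_stdNormalPDF : Continuous stdNormalPDF := by
  rw [funext stdNormalPDF_apply]; fun_prop

lemma hasDerivAt_stdNormalPDF (x : ℝ) : HasDerivAt stdNormalPDF (-x * stdNormalPDF x) x := by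
  have hexponent : HasDerivAt (fun t : ℝ => -t ^ 2 / 2) (-x) x :=
    ((hasDerivAt_pow 2 x).neg.div_const 2).congr_deriv (by ring)
  refine ((hexponent.exp.div_const (√(2 * π))).congr_deriv ?_).congr_of_eventuallyEq
    (.of_forall stdNormalPDF_apply)
  rw [stdNormalPDF_apply]; ring

lemma tendsto_stdNormalPDF_atTop : Tendsto stdNormalPDF atTop (𝓝 0) := by
  rw [funext stdNormalPDF_apply, ← zero_div (√(2 * π))]
  refine (tendsto_exp_atBot.comp ?_).div_const _
  exact (tendsto_neg_atTop_atBot.comp (tendsto_pow_atTop two_ne_zero)).atBot_div_const two_pos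

lemma stdNormalCDF_eq_setIntegral (x : ℝ) : stdNormalCDF x = ∫ t in Iic x, stdNormalPDF t := by
  simp only [stdNormalCDF, stdNormalPDF_apply]

lemma one_sub_stdNormalCDF (x : ℝ) : 1 - stdNormalCDF x = ∫ t in Ioi x, stdNormalPDF t := by
  rw [← integral_stdNormalPDF, stdNormalCDF_eq_setIntegral,
    ← intervalIntegral.integral_Iic_add_Ioi integrable_stdNormalPDF.integrableOn
      integrable_stdNormalPDF.integrableOn, add_sub_cancel_left]

lemma setIntegral_stdNormalPDF_pos {s : Set ℝ} (hvol : 0 < volume s) :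
    0 < ∫ t in s, stdNormalPDF t := by
  rw [setIntegral_pos_iff_support_of_nonneg_ae (.of_forall fun t => (stdNormalPDF_pos t).le)
    integrable_stdNormalPDF.integrableOn,
    Function.support_eq_univ fun t => (stdNormalPDF_pos t).ne', univ_inter]
  exact hvol

lemma stdNormalCDF_pos (x : ℝ) : 0 < stdNormalCDF x := by
  rw [stdNormalCDF_eq_setIntegral]
  exact setIntegral_stdNormalPDF_pos (by simp)

lemma stdNormalCDF_lt_one (x : ℝ) : stdNormalCDF x < 1 := by
  have := setIntegral_stdNormalPDF_pos (by simp : 0 < volume (Ioi x))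
  rw [← one_sub_stdNormalCDF] at this
  linarith

lemma hasDerivAt_stdNormalCDF (x : ℝ) : HasDerivAt stdNormalCDF (stdNormalPDF x) x := by
  have hint := integrable_stdNormalPDF.integrableOn (s := Iic (0 : ℝ))
  have h : stdNormalCDF = fun z => stdNormalCDF 0 + ∫ t in (0 : ℝ)..z, stdNormalPDF t := by
    ext z
    rw [← intervalIntegral.integral_Iic_sub_Iic hint integrable_stdNormalPDF.integrableOn,
      stdNormalCDF_eq_setIntegral, stdNormalCDF_eq_setIntegral, add_sub_cancel]
  rw [h]
  exact (continuous_stdNormalPDF.integral_hasStrictDerivAt 0 x).hasDerivAt.const_add _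

lemma tendsto_stdNormalCDF_atTop : Tendsto stdNormalCDF atTop (𝓝 1) := by
  have := tendsto_setIntegral_of_monotone (μ := volume) (f := stdNormalPDF)
    (fun x : ℝ => measurableSet_Iic) (fun _ _ h => Iic_subset_Iic.2 h)
    integrable_stdNormalPDF.integrableOn
  rwa [iUnion_Iic, setIntegral_univ, integral_stdNormalPDF,
    ← funext stdNormalCDF_eq_setIntegral] at this

/-- Mills' ratio asymptotics. -/
lemma tendsto_one_sub_stdNormalCDF_div_stdNormalPDF_div_id :
    Tendsto (fun x => (1 - stdNormalCDF x) / (stdNormalPDF x / x)) atTop (𝓝 1) := by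
  have hg : ∀ x ≠ 0, HasDerivAt (fun x => stdNormalPDF x / x)
      (-(stdNormalPDF x * (1 + (x ^ 2)⁻¹))) x := fun x hx =>
    ((hasDerivAt_stdNormalPDF x).div (hasDerivAt_id x) hx).congr_deriv
      (by simp only [id]; field_simp; ring)
  have hratio : Tendsto (fun x : ℝ => (1 + (x ^ 2)⁻¹)⁻¹) atTop (𝓝 1) := by
    simpa using ((tendsto_inv_atTop_zero.comp (tendsto_pow_atTop (α := ℝ) two_ne_zero)).const_add
      1).inv₀ (by norm_num)
  refine HasDerivAt.lhopital_zero_atTop (f' := fun x => -stdNormalPDF x)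
    (.of_forall fun x => (hasDerivAt_stdNormalCDF x).const_sub 1)
    ((eventually_ne_atTop 0).mono hg)
    (.of_forall fun x => neg_ne_zero.2 (mul_pos (stdNormalPDF_pos x) (by positivity)).ne')
    (by simpa using tendsto_stdNormalCDF_atTop.const_sub 1)
    (by simpa [div_eq_mul_inv] using tendsto_stdNormalPDF_atTop.mul tendsto_inv_atTop_zero) ?_
  refine hratio.congr fun x => ?_
  field_simp [(stdNormalPDF_pos x).ne']

lemma hasDerivAt_logit {x : ℝ} (h0 : 0 < x) (h1 : x < 1) :
    HasDerivAt logit (x⁻¹ + (1 - x)⁻¹) x := by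
  have hlog_one_sub : HasDerivAt (fun x => log (1 - x)) ((1 - x)⁻¹ * -1) x :=
    (hasDerivAt_log (sub_ne_zero.2 h1.ne')).comp x ((hasDerivAt_id x).const_sub 1)
  exact ((hasDerivAt_log h0.ne').sub hlog_one_sub).congr_deriv (by ring)

lemma hasDerivAt_logit_stdNormalCDF (x : ℝ) :
    HasDerivAt (fun x => logit (stdNormalCDF x))
      (stdNormalPDF x * ((stdNormalCDF x)⁻¹ + (1 - stdNormalCDF x)⁻¹)) x :=
  ((hasDerivAt_logit (stdNormalCDF_pos x) (stdNormalCDF_lt_one x)).comp x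
    (hasDerivAt_stdNormalCDF x)).congr_deriv (mul_comm _ _)

lemma isEquivalent_deriv_logit_stdNormalCDF :
    (fun x => stdNormalPDF x * ((stdNormalCDF x)⁻¹ + (1 - stdNormalCDF x)⁻¹))
      ~[atTop] id := by
  refine isEquivalent_of_tendsto_one ?_
  have hleft : Tendsto (fun x => stdNormalPDF x / x * (stdNormalCDF x)⁻¹) atTop (𝓝 0) := by
    simpa [div_eq_mul_inv] using ((tendsto_stdNormalPDF_atTop.mul tendsto_inv_atTop_zero).mul
      (tendsto_stdNormalCDF_atTop.inv₀ one_ne_zero))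
  have hright := tendsto_one_sub_stdNormalCDF_div_stdNormalPDF_div_id.inv₀ one_ne_zero
  have hsum := hleft.add hright
  rw [inv_one, zero_add] at hsum
  refine hsum.congr fun x => ?_
  simp only [Pi.div_apply, id, inv_div]
  ring

lemma isEquivalent_deriv_logit_stdNormalCDF_comp {u u' : ℝ → ℝ}
    (hu : ∀ᶠ n in atTop, HasDerivAt u (u' n) n) (hu_top : Tendsto u atTop atTop) :
    deriv (fun n => logit (stdNormalCDF (u n))) ~[atTop] fun n => u n * u' n := by
  refine ((isEquivalent_deriv_logit_stdNormalCDF.comp_tendsto hu_top).mul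
    (IsEquivalent.refl (u := u'))).congr_left ?_
  filter_upwards [hu] with n hn
  exact ((hasDerivAt_logit_stdNormalCDF (u n)).comp n hn).deriv.symm

lemma hasDerivAt_mul_add_mul_sqrt_add (a b c : ℝ) {n : ℝ} (hn : 0 < n) :
    HasDerivAt (fun n => a * n + b * √n + c) (a + b / (2 * √n)) n := by
  refine ((((hasDerivAt_id n).const_mul a).add ((hasDerivAt_sqrt hn.ne').const_mul b)).add_const
    c).congr_deriv ?_
  simp [div_eq_mul_inv]

lemma tendsto_mul_add_mul_sqrt_add_div_self (a b c : ℝ) :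
    Tendsto (fun n => (a * n + b * √n + c) / n) atTop (𝓝 a) := by
  have h := (tendsto_inv_atTop_zero.comp tendsto_sqrt_atTop).const_mul b |>.add
    (tendsto_inv_atTop_zero.const_mul c) |>.const_add a
  simp only [mul_zero, add_zero] at h
  refine h.congr' ?_
  filter_upwards [eventually_gt_atTop 0] with n hn
  rw [Function.comp_apply, ← sqrt_div_self]
  field_simp
  ring

lemma tendsto_deriv_logit_stdNormalCDF_div_self (a b c : ℝ) (ha : 0 < a) :
    Tendsto (fun n : ℝ =>
        deriv (fun n : ℝ => logit (stdNormalCDF (a * n + b * Real.sqrt n + c))) n / n)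
      atTop (𝓝 (a ^ 2)) := by
  have hu_div := tendsto_mul_add_mul_sqrt_add_div_self a b c
  have hu' : Tendsto (fun n => a + b / (2 * √n)) atTop (𝓝 a) := by
    have h := ((tendsto_inv_atTop_zero.comp tendsto_sqrt_atTop).const_mul (b / 2)).const_add a
    rw [mul_zero, add_zero] at h
    refine h.congr fun n => ?_
    rw [Function.comp_apply]
    ring
  have hu_top : Tendsto (fun n => a * n + b * √n + c) atTop atTop := by
    refine (hu_div.pos_mul_atTop ha tendsto_id).congr' ?_
    filter_upwards [eventually_ne_atTop 0] with n hn
    exact div_mul_cancel₀ _ hn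
  have hequiv := (isEquivalent_deriv_logit_stdNormalCDF_comp
    ((eventually_gt_atTop 0).mono fun n hn => hasDerivAt_mul_add_mul_sqrt_add a b c hn)
    hu_top).div (IsEquivalent.refl (u := id))
  have hlim := hu_div.mul hu'
  rw [← sq] at hlim
  refine hequiv.symm.tendsto_nhds (hlim.congr fun n => ?_)
  simp only [Pi.div_apply, id, mul_div_right_comm]

lemma deriv_comp_sqrt {f : ℝ → ℝ} {s : ℝ} (hs : 0 < s) (hf : DifferentiableAt ℝ f √s) :
    deriv (fun s => f √s) s = deriv f √s / √s / 2 := by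
  change deriv (f ∘ sqrt) s = _
  rw [(hf.hasDerivAt.comp s (hasDerivAt_sqrt hs.ne')).deriv]
  field_simp

theorem stmt_14 (a b c : ℝ) (ha : 0 < a) :
    Tendsto (fun n : ℝ =>
        deriv (fun n : ℝ => logit (stdNormalCDF (a * n + b * Real.sqrt n + c))) n / n)
      atTop (nhds (a ^ 2)) ∧
    Tendsto (fun s : ℝ =>
        deriv (fun s : ℝ =>
          logit (stdNormalCDF (a * Real.sqrt s + b * Real.sqrt (Real.sqrt s) + c))) s)
      atTop (nhds (a ^ 2 / 2)) := by
  have hn := tendsto_deriv_logit_stdNormalCDF_div_self a b c ha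
  refine ⟨hn, (hn.comp tendsto_sqrt_atTop).div_const 2 |>.congr' ?_⟩
  filter_upwards [eventually_gt_atTop 0] with s hs
  have hdiff := ((hasDerivAt_logit_stdNormalCDF _).comp _
    (hasDerivAt_mul_add_mul_sqrt_add a b c (sqrt_pos.2 hs))).differentiableAt
  exact (deriv_comp_sqrt hs hdiff).symm
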